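/- arXiv:2304.10418 — 6 statements merged into one kernel-verified Lean document; each statement's English description precedes it below -/
import Mathlib

section
/- Let 0 < α ≤ π/6, let K be a convex body in ℝⁿ with diam K = 2cos α, and let x ∈ S^{n-1} be such that Q(x,α) ⊆ K, where n ≥ 2. Then x is a boundary point of K. -/
open Real
open scoped RealInnerProductSpace

/-- The unit sphere `S^{n-1}` in `ℝⁿ`. -/
noncomputable def unitSphere (n : ℕ) : Set (EuclideanSpace ℝ (Fin n)) :=
  Metric.sphere (0 : EuclideanSpace ℝ (Fin n)) 1

/-- `Q(x, α) = {x} ∪ {y ∈ S^{n-1} : ‖x - y‖ = 2 cos α}`. -/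
noncomputable def Qset {n : ℕ} (x : EuclideanSpace ℝ (Fin n)) (α : ℝ) :
    Set (EuclideanSpace ℝ (Fin n)) :=
  {x} ∪ {y | y ∈ unitSphere n ∧ ‖x - y‖ = 2 * Real.cos α}

set_option maxHeartbeats 1000000 in
theorem stmt_1 (n : ℕ) (hn : 2 ≤ n) (α : ℝ) (hα0 : 0 < α) (hα : α ≤ π / 6)
    (K : Set (EuclideanSpace ℝ (Fin n)))
    (hKcomp : IsCompact K) (hKconv : Convex ℝ K) (hKint : (interior K).Nonempty)
    (hdiam : Metric.diam K = 2 * Real.cos α)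
    (x : EuclideanSpace ℝ (Fin n)) (hx : x ∈ unitSphere n)
    (hQ : Qset x α ⊆ K) :
    x ∈ frontier K := by
  have hxK : x ∈ K := hQ (Or.inl rfl)
  have hxnorm : ‖x‖ = 1 := by simpa [unitSphere] using hx
  have hx0 : x ≠ 0 := by intro h; rw [h] at hxnorm; simp at hxnorm
  set c := Real.cos α with hc_def
  have hc0 : 0 < c := Real.cos_pos_of_mem_Ioo ⟨by linarith [Real.pi_pos], by
    have := Real.pi_pos; linarith⟩
  have hc1 : c ≤ 1 := Real.cos_le_one α
  -- find a unit vector u orthogonal to x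
  obtain ⟨u, hu_orth, hu_norm⟩ :
      ∃ u : EuclideanSpace ℝ (Fin n), ⟪x, u⟫ = 0 ∧ ‖u‖ = 1 := by
    have hfr : Module.finrank ℝ (EuclideanSpace ℝ (Fin n)) = n := by simp
    have hspan : Module.finrank ℝ (ℝ ∙ x) = 1 := finrank_span_singleton hx0
    have horth : 0 < Module.finrank ℝ (ℝ ∙ x)ᗮ := by
      have := Submodule.finrank_add_finrank_orthogonal (K := (ℝ ∙ x)) (𝕜 := ℝ)
      omega
    have hne : (ℝ ∙ x)ᗮ ≠ ⊥ := by
      intro h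
      rw [h] at horth
      simp at horth
    obtain ⟨v, hv_mem, hv0⟩ := Submodule.exists_mem_ne_zero_of_ne_bot hne
    refine ⟨‖v‖⁻¹ • v, ?_, ?_⟩
    · have h0 : ⟪x, v⟫ = 0 :=
        (Submodule.mem_orthogonal _ _).mp hv_mem x (Submodule.mem_span_singleton_self x)
      rw [real_inner_smul_right, h0, mul_zero]
    · rw [norm_smul, norm_inv, norm_norm, inv_mul_cancel₀ (norm_ne_zero_iff.mpr hv0)]
  -- build y on the sphere with ‖x - y‖ = 2c
  set s := 2 * c * Real.sqrt (1 - c ^ 2) with hs_def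
  have hs_sq : s ^ 2 = 4 * c ^ 2 * (1 - c ^ 2) := by
    have h1 : (0:ℝ) ≤ 1 - c ^ 2 := by nlinarith
    rw [hs_def]
    rw [mul_pow, mul_pow, Real.sq_sqrt h1]
    ring
  set y := (1 - 2 * c ^ 2) • x + s • u with hy_def
  have hinner : ∀ a b : ℝ, ⟪a • x, b • u⟫ = 0 := by
    intro a b
    rw [real_inner_smul_left, real_inner_smul_right, hu_orth]
    ring
  have hy_norm : ‖y‖ = 1 := by
    have h2 : ‖y‖ ^ 2 = 1 := by
      rw [hy_def, norm_add_sq_real, hinner]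
      rw [norm_smul, norm_smul, hxnorm, hu_norm]
      simp only [mul_one, Real.norm_eq_abs, sq_abs]
      nlinarith [hs_sq]
    nlinarith [norm_nonneg y]
  have hxy : ‖x - y‖ = 2 * c := by
    have hxmy : x - y = (2 * c ^ 2) • x - s • u := by
      rw [hy_def]
      module
    have h2 : ‖x - y‖ ^ 2 = (2 * c) ^ 2 := by
      rw [hxmy, norm_sub_sq_real, hinner]
      rw [norm_smul, norm_smul, hxnorm, hu_norm]
      simp only [mul_one, Real.norm_eq_abs, sq_abs]
      nlinarith [hs_sq]
    nlinarith [norm_nonneg (x - y), hc0]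
  have hyK : y ∈ K := hQ (Or.inr ⟨by simpa [unitSphere] using hy_norm, hxy⟩)
  -- now show x ∉ interior K
  rw [frontier, IsClosed.closure_eq hKcomp.isClosed]
  refine ⟨hxK, ?_⟩
  intro hxint
  obtain ⟨ε, hε0, hball⟩ := Metric.isOpen_iff.mp isOpen_interior x hxint
  set v := x - y with hv_def
  have hv_norm : ‖v‖ = 2 * c := hxy
  have hv_pos : 0 < ‖v‖ := by rw [hv_norm]; linarith
  set t := ε / 2 / ‖v‖ with ht_def
  have ht_pos : 0 < t := by positivity
  set z := x + t • v with hz_def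
  have hz_ball : z ∈ Metric.ball x ε := by
    rw [Metric.mem_ball, dist_eq_norm, hz_def]
    have : x + t • v - x = t • v := by abel
    rw [this, norm_smul, Real.norm_eq_abs, abs_of_pos ht_pos, ht_def]
    rw [div_mul_cancel₀ _ (ne_of_gt hv_pos)]
    linarith
  have hzK : z ∈ K := interior_subset (hball hz_ball)
  have hzy : dist z y = (1 + t) * ‖v‖ := by
    rw [dist_eq_norm, hz_def, hv_def]
    have : x + t • (x - y) - y = (1 + t) • (x - y) := by module
    rw [this, norm_smul, Real.norm_eq_abs, abs_of_pos (by linarith : (0:ℝ) < 1 + t)]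
  have hle : dist z y ≤ Metric.diam K := Metric.dist_le_diam_of_mem hKcomp.isBounded hzK hyK
  rw [hzy, hv_norm, hdiam] at hle
  nlinarith
end

section
/- Let 0 < α ≤ π/6, let K be a convex body in ℝⁿ with diam K = 2cos α, and let x ∈ S^{n-1} be such that Q(x,α) ⊆ K, where n ≥ 2. If a direction ξ ∈ S^{n-1} illuminates the boundary point x of K, then θ(ξ, −x) ≤ π/2 − α, i.e., ξ belongs to the spherical cap C(−x, π/2 − α). -/
open Real
open scoped RealInnerProductSpace

/-- The closed spherical cap `C(x, α) = {y ∈ S^{n-1} : θ(x,y) ≤ α}`. -/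
noncomputable def sphericalCap {n : ℕ} (x : EuclideanSpace ℝ (Fin n)) (α : ℝ) :
    Set (EuclideanSpace ℝ (Fin n)) :=
  {y | y ∈ unitSphere n ∧ InnerProductGeometry.angle x y ≤ α}

/-- In dimension at least 2 there is a unit vector orthogonal to any given vector. -/
lemma exists_unit_orthogonal (n : ℕ) (hn : 2 ≤ n) (x : EuclideanSpace ℝ (Fin n)) :
    ∃ u : EuclideanSpace ℝ (Fin n), ‖u‖ = 1 ∧ ⟪x, u⟫ = 0 := by
  have hbot : (ℝ ∙ x)ᗮ ≠ ⊥ := by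
    intro h
    rw [Submodule.orthogonal_eq_bot_iff] at h
    have h1 : Module.finrank ℝ (ℝ ∙ x) = n := by
      rw [h]
      simpa using finrank_euclideanSpace_fin (𝕜 := ℝ) (n := n)
    rcases eq_or_ne x 0 with hx0 | hx0
    · rw [hx0, Submodule.span_zero_singleton] at h1
      rw [finrank_bot] at h1
      omega
    · rw [finrank_span_singleton hx0] at h1
      omega
  obtain ⟨v, hv, hv0⟩ := Submodule.exists_mem_ne_zero_of_ne_bot hbot
  refine ⟨‖v‖⁻¹ • v, ?_, ?_⟩
  · rw [norm_smul, Real.norm_eq_abs, abs_of_nonneg (by positivity),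
      inv_mul_cancel₀ (norm_ne_zero_iff.mpr hv0)]
  · have hxv : ⟪x, v⟫ = 0 :=
      (Submodule.mem_orthogonal _ v).mp hv x (Submodule.mem_span_singleton_self x)
    rw [real_inner_smul_right, hxv, mul_zero]

set_option maxHeartbeats 1000000 in
theorem stmt_2 (n : ℕ) (hn : 2 ≤ n) (α : ℝ) (hα0 : 0 < α) (hα : α ≤ π / 6)
    (K : Set (EuclideanSpace ℝ (Fin n)))
    (hKcomp : IsCompact K) (hKconv : Convex ℝ K) (hKint : (interior K).Nonempty)
    (hdiam : Metric.diam K = 2 * Real.cos α)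
    (x : EuclideanSpace ℝ (Fin n)) (hx : x ∈ unitSphere n)
    (hQ : Qset x α ⊆ K)
    (ξ : EuclideanSpace ℝ (Fin n)) (hξ : ξ ∈ unitSphere n)
    (hillum : ∃ t : ℝ, 0 ≤ t ∧ x + t • ξ ∈ interior K) :
    ξ ∈ sphericalCap (-x) (π / 2 - α) := by
  obtain ⟨t, ht0, hp⟩ := hillum
  set p : EuclideanSpace ℝ (Fin n) := x + t • ξ with hpdef
  have hxS : ‖x‖ = 1 := by simpa [unitSphere] using hx
  have hξS : ‖ξ‖ = 1 := by simpa [unitSphere] using hξ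
  have hπ : 0 < π := Real.pi_pos
  have hαπ2 : α < π / 2 := by linarith
  have hcos : 0 < Real.cos α := Real.cos_pos_of_mem_Ioo ⟨by linarith, hαπ2⟩
  have hsin : 0 < Real.sin α := Real.sin_pos_of_pos_of_lt_pi hα0 (by linarith)
  -- set up the inner product data
  set c : ℝ := ⟪x, ξ⟫ with hc
  set w : EuclideanSpace ℝ (Fin n) := ξ - c • x with hwdef
  have hxw : ⟪x, w⟫ = 0 := by
    rw [hwdef, inner_sub_right, real_inner_smul_right, real_inner_self_eq_norm_sq, hxS, ← hc]
    ring
  have hw2 : ‖w‖ ^ 2 = 1 - c ^ 2 := by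
    have h := norm_sub_sq_real ξ (c • x)
    rw [← hwdef, real_inner_smul_right, norm_smul, real_inner_comm x ξ, ← hc, hξS, hxS,
      Real.norm_eq_abs] at h
    rw [h]
    simp only [mul_one, mul_pow, sq_abs, one_pow]
    ring
  -- a unit vector u orthogonal to x with ⟪ξ, u⟫ = -‖w‖
  obtain ⟨u, hu1, hxu, hξu⟩ :
      ∃ u : EuclideanSpace ℝ (Fin n), ‖u‖ = 1 ∧ ⟪x, u⟫ = 0 ∧ ⟪ξ, u⟫ = -‖w‖ := by
    by_cases hw : w = 0
    · obtain ⟨u, hu1, hxu⟩ := exists_unit_orthogonal n hn x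
      refine ⟨u, hu1, hxu, ?_⟩
      have hξcx : ξ = c • x := by
        have h := hw
        rw [hwdef, sub_eq_zero] at h
        exact h
      rw [hξcx, real_inner_smul_left, hxu, hw]
      simp
    · have hwn : 0 < ‖w‖ := norm_pos_iff.mpr hw
      have hξw : ⟪ξ, w⟫ = ‖w‖ ^ 2 := by
        rw [hw2, hwdef, inner_sub_right, real_inner_smul_right, real_inner_self_eq_norm_sq,
          hξS, real_inner_comm x ξ, ← hc]
        ring
      refine ⟨-(‖w‖⁻¹ • w), ?_, ?_, ?_⟩
      · rw [norm_neg, norm_smul, Real.norm_eq_abs, abs_of_nonneg (by positivity),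
          inv_mul_cancel₀ (ne_of_gt hwn)]
      · rw [inner_neg_right, real_inner_smul_right, hxw, mul_zero, neg_zero]
      · rw [inner_neg_right, real_inner_smul_right, hξw, pow_two, ← mul_assoc,
          inv_mul_cancel₀ (ne_of_gt hwn), one_mul]
  -- the point y ∈ Q(x,α)
  set y : EuclideanSpace ℝ (Fin n) := (-Real.cos (2 * α)) • x + Real.sin (2 * α) • u
    with hydef
  have hyy : ‖y‖ ^ 2 = 1 := by
    have h := norm_add_sq_real ((-Real.cos (2 * α)) • x) (Real.sin (2 * α) • u)
    rw [← hydef, real_inner_smul_left, real_inner_smul_right, hxu] at h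
    rw [h]
    simp only [norm_smul, Real.norm_eq_abs, mul_zero, mul_pow, sq_abs, hxS, hu1]
    simp only [mul_one, one_pow]
    nlinarith [Real.sin_sq_add_cos_sq (2 * α)]
  have hynorm : ‖y‖ = 1 := by
    have h := Real.sqrt_sq (norm_nonneg y)
    rw [hyy] at h
    simpa using h.symm
  have hxy : ⟪x, y⟫ = -Real.cos (2 * α) := by
    rw [hydef, inner_add_right, real_inner_smul_right, real_inner_smul_right, hxu,
      real_inner_self_eq_norm_sq, hxS]
    ring
  have hxysub : ‖x - y‖ = 2 * Real.cos α := by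
    have h2 : ‖x - y‖ ^ 2 = (2 * Real.cos α) ^ 2 := by
      rw [norm_sub_sq_real, hxy, hxS, hyy]
      have h3 := Real.cos_sq α
      nlinarith
    have h := Real.sqrt_sq (norm_nonneg (x - y))
    rw [h2] at h
    rw [← h, Real.sqrt_sq (by positivity)]
  have hyK : y ∈ K := by
    apply hQ
    right
    exact ⟨by simpa [unitSphere] using hynorm, hxysub⟩
  -- interior ball
  obtain ⟨ε, hε, hball⟩ := Metric.isOpen_iff.mp isOpen_interior p hp
  -- key bound: points of K are at distance at most 2cos α - ε/2 from p
  have hbound : ∀ z ∈ K, ‖p - z‖ + ε / 2 ≤ 2 * Real.cos α := by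
    intro z hz
    by_cases hpz : p = z
    · have hq : p + (ε / 2) • x ∈ K := by
        apply interior_subset; apply hball
        rw [Metric.mem_ball, dist_eq_norm]
        have h1 : p + (ε / 2) • x - p = (ε / 2) • x := by abel
        rw [h1, norm_smul, hxS, mul_one, Real.norm_eq_abs, abs_of_pos (half_pos hε)]
        linarith
      have hdq : dist (p + (ε / 2) • x) z ≤ Metric.diam K :=
        Metric.dist_le_diam_of_mem hKcomp.isBounded hq hz
      rw [hdiam] at hdq
      have h2 : dist (p + (ε / 2) • x) z = ε / 2 := by
        rw [dist_eq_norm, ← hpz]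
        have h1 : p + (ε / 2) • x - p = (ε / 2) • x := by abel
        rw [h1, norm_smul, hxS, mul_one, Real.norm_eq_abs, abs_of_pos (half_pos hε)]
      rw [h2] at hdq
      rw [hpz]
      simpa using hdq
    · have hnz : 0 < ‖p - z‖ := norm_pos_iff.mpr (sub_ne_zero.mpr hpz)
      set q : EuclideanSpace ℝ (Fin n) := p + (ε / (2 * ‖p - z‖)) • (p - z) with hqdef
      have hqK : q ∈ K := by
        apply interior_subset; apply hball
        rw [Metric.mem_ball, hqdef, dist_eq_norm]
        have h1 : p + (ε / (2 * ‖p - z‖)) • (p - z) - p = (ε / (2 * ‖p - z‖)) • (p - z) := by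
          abel
        rw [h1, norm_smul, Real.norm_eq_abs, abs_of_pos (by positivity)]
        have h2 : ε / (2 * ‖p - z‖) * ‖p - z‖ = ε / 2 := by
          field_simp
        rw [h2]
        linarith
      have hdq : dist q z ≤ Metric.diam K :=
        Metric.dist_le_diam_of_mem hKcomp.isBounded hqK hz
      rw [hdiam] at hdq
      have hqz : dist q z = ‖p - z‖ + ε / 2 := by
        rw [dist_eq_norm, hqdef]
        have h1 : p + (ε / (2 * ‖p - z‖)) • (p - z) - z
            = (1 + ε / (2 * ‖p - z‖)) • (p - z) := by
          rw [add_smul, one_smul]; abel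
        rw [h1, norm_smul, Real.norm_eq_abs, abs_of_pos (by positivity)]
        field_simp
      linarith [hqz ▸ hdq]
  -- derive the scalar inequality
  have hpy : ‖p - y‖ ^ 2 = (2 * Real.cos α) ^ 2 + 2 * (t * ⟪x - y, ξ⟫) + t ^ 2 := by
    have h1 : p - y = (x - y) + t • ξ := by rw [hpdef]; abel
    rw [h1, norm_add_sq_real, real_inner_smul_right, norm_smul, hxysub, hξS, mul_one,
      Real.norm_eq_abs, sq_abs]
  have hby := hbound y hyK
  have hlt : 2 * (t * ⟪x - y, ξ⟫) + t ^ 2 < 0 := by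
    nlinarith [norm_nonneg (p - y), hpy, hby, hε, hcos]
  have hinner : ⟪x - y, ξ⟫ < 0 := by
    rcases eq_or_lt_of_le ht0 with h | h
    · exfalso; rw [← h] at hlt; simp at hlt
    · nlinarith
  have hinnval : ⟪x - y, ξ⟫ = c * (1 + Real.cos (2 * α)) + Real.sin (2 * α) * ‖w‖ := by
    rw [inner_sub_left, hydef, inner_add_left, real_inner_smul_left, real_inner_smul_left,
      real_inner_comm ξ u, hξu, ← hc]
    ring
  rw [hinnval] at hinner
  have hkey : Real.cos α * c + Real.sin α * ‖w‖ < 0 := by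
    rw [Real.cos_two_mul, Real.sin_two_mul] at hinner
    nlinarith [hcos]
  have hcneg : c < 0 := by
    nlinarith [mul_nonneg hsin.le (norm_nonneg w), hcos]
  have hc2 : Real.sin α ^ 2 ≤ c ^ 2 := by
    have hA : 0 < -(Real.cos α * c) - Real.sin α * ‖w‖ := by linarith
    have hB : 0 ≤ -(Real.cos α * c) + Real.sin α * ‖w‖ := by
      nlinarith [mul_nonneg hsin.le (norm_nonneg w)]
    nlinarith [mul_nonneg hA.le hB, hw2, Real.sin_sq_add_cos_sq α]
  have hfin : Real.sin α ≤ -c := by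
    by_contra hcon
    push_neg at hcon
    have h1 : (-c) * (-c) < Real.sin α * Real.sin α :=
      mul_lt_mul' hcon.le hcon (by linarith) hsin
    ring_nf at h1
    ring_nf at hc2
    linarith [hc2, h1]
  -- conclude
  refine ⟨hξ, ?_⟩
  have hang : InnerProductGeometry.angle (-x) ξ = Real.arccos (-c) := by
    unfold InnerProductGeometry.angle
    rw [inner_neg_left, ← hc, norm_neg, hxS, hξS]
    norm_num
  rw [hang, Real.arccos_eq_pi_div_two_sub_arcsin]
  have harc : α ≤ Real.arcsin (-c) := by
    have h1 : Real.arcsin (Real.sin α) ≤ Real.arcsin (-c) :=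
      Real.monotone_arcsin hfin
    rwa [Real.arcsin_sin (by linarith) (by linarith)] at h1
  linarith
end

section
/- Let 0 < α ≤ π/6 and let X ⊆ S^{n-1}. If 4α ≤ θ(x, y) ≤ π − 6α for all distinct x, y ∈ X, then the set W(X) := ⋃_{x ∈ X} Q(x, α) satisfies diam W(X) ≤ 2cos α. -/
open Real
open scoped RealInnerProductSpace

/-!
The points of `Q(x, α)` other than `x` are the unit vectors at angle `π - 2α` from `x`, i.e. at
angle `2α` from `-x`. Passing through the antipodes `-x`, `-y` and using the triangle inequality for
angles, any two points of `W(X)` make an angle at most `π - 2α`, and on the unit sphere a chord of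
angle at most `π - 2α` has length at most `2 sin (π/2 - α) = 2 cos α`.
-/

open InnerProductGeometry

section UnitVectors

variable {V : Type*} [NormedAddCommGroup V] [InnerProductSpace ℝ V]

lemma norm_sub_sq_of_norm_eq_one {a b : V} (ha : ‖a‖ = 1) (hb : ‖b‖ = 1) :
    ‖a - b‖ ^ 2 = 2 - 2 * cos (angle a b) := by
  rw [sq, norm_sub_sq_eq_norm_sq_add_norm_sq_sub_two_mul_norm_mul_norm_mul_cos_angle, ha, hb]
  ring

lemma angle_eq_pi_sub_two_mul_of_norm_sub_eq {x a : V} {α : ℝ} (hx : ‖x‖ = 1) (ha : ‖a‖ = 1)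
    (hα0 : 0 ≤ α) (hα : α ≤ π / 2) (h : ‖x - a‖ = 2 * cos α) :
    angle x a = π - 2 * α := by
  have hcos : cos (angle x a) = cos (π - 2 * α) := by
    have hsq := norm_sub_sq_of_norm_eq_one hx ha
    rw [h, cos_pi_sub, cos_two_mul] at *
    linarith
  exact injOn_cos ⟨angle_nonneg x a, angle_le_pi x a⟩ ⟨by linarith, by linarith⟩ hcos

lemma norm_sub_le_two_mul_cos_of_angle_le {a b : V} {α : ℝ} (ha : ‖a‖ = 1) (hb : ‖b‖ = 1)
    (hα0 : 0 ≤ α) (hα : α ≤ π / 2) (h : angle a b ≤ π - 2 * α) :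
    ‖a - b‖ ≤ 2 * cos α := by
  have hcos : cos (π - 2 * α) ≤ cos (angle a b) :=
    cos_le_cos_of_nonneg_of_le_pi (angle_nonneg a b) (by linarith) h
  rw [cos_pi_sub, cos_two_mul] at hcos
  have hsq : ‖a - b‖ ^ 2 ≤ (2 * cos α) ^ 2 := by
    rw [norm_sub_sq_of_norm_eq_one ha hb]
    linarith
  exact (pow_le_pow_iff_left₀ (norm_nonneg _)
    (mul_nonneg zero_le_two (cos_nonneg_of_neg_pi_div_two_le_of_le (by linarith) hα))
    two_ne_zero).mp hsq

lemma angle_le_pi_sub_angle_add_angle_neg (a b y : V) :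
    angle a b ≤ π - angle a y + angle (-y) b := by
  simpa only [angle_neg_right] using angle_le_angle_add_angle a (-y) b

end UnitVectors

section Qset

variable {n : ℕ} {α : ℝ} {x y a b : EuclideanSpace ℝ (Fin n)}

lemma norm_eq_one_of_mem_unitSphere (hx : x ∈ unitSphere n) : ‖x‖ = 1 :=
  mem_sphere_zero_iff_norm.mp hx

lemma eq_or_angle_eq_of_mem_Qset (hx : ‖x‖ = 1) (hα0 : 0 ≤ α) (hα : α ≤ π / 2)
    (ha : a ∈ Qset x α) : a = x ∨ ‖a‖ = 1 ∧ angle x a = π - 2 * α := by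
  rcases ha with rfl | ⟨ha, hdist⟩
  · exact Or.inl rfl
  · have ha := norm_eq_one_of_mem_unitSphere ha
    exact Or.inr ⟨ha, angle_eq_pi_sub_two_mul_of_norm_sub_eq hx ha hα0 hα hdist⟩

lemma norm_eq_one_of_mem_Qset (hx : ‖x‖ = 1) (hα0 : 0 ≤ α) (hα : α ≤ π / 2)
    (ha : a ∈ Qset x α) : ‖a‖ = 1 := by
  rcases eq_or_angle_eq_of_mem_Qset hx hα0 hα ha with rfl | ⟨ha, -⟩ <;> assumption

lemma angle_le_of_mem_Qset_self (hx : ‖x‖ = 1) (hα0 : 0 ≤ α) (hα : α ≤ π / 6)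
    (ha : a ∈ Qset x α) (hb : b ∈ Qset x α) : angle a b ≤ π - 2 * α := by
  rcases eq_or_angle_eq_of_mem_Qset hx hα0 (by linarith) ha with rfl | ⟨-, hax⟩ <;>
    rcases eq_or_angle_eq_of_mem_Qset hx hα0 (by linarith) hb with rfl | ⟨-, hbx⟩
  · rw [angle_self (norm_ne_zero_iff.mp (by rw [hx]; exact one_ne_zero))]
    linarith [pi_pos]
  · exact hbx.le
  · rw [angle_comm, hax]
  · have := angle_le_angle_add_angle a (-x) b
    rw [angle_neg_right, angle_neg_left, angle_comm a x, hax, hbx] at this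
    linarith

lemma angle_le_of_mem_Qset_of_angle_le (hα0 : 0 ≤ α) (hα : α ≤ π / 2)
    (hy : ‖y‖ = 1) (hxy : 4 * α ≤ angle x y) (hxy' : angle x y ≤ π - 6 * α)
    (hb : b ∈ Qset y α) : angle x b ≤ π - 2 * α := by
  rcases eq_or_angle_eq_of_mem_Qset hy hα0 hα hb with rfl | ⟨-, hby⟩
  · linarith
  · have := angle_le_pi_sub_angle_add_angle_neg x b y
    rw [angle_neg_left, hby] at this
    linarith

lemma angle_le_of_mem_Qset_of_mem_Qset (hα0 : 0 ≤ α) (hα : α ≤ π / 2)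
    (hx : ‖x‖ = 1) (hy : ‖y‖ = 1) (hxy : 4 * α ≤ angle x y) (hxy' : angle x y ≤ π - 6 * α)
    (ha : a ∈ Qset x α) (hb : b ∈ Qset y α) : angle a b ≤ π - 2 * α := by
  rcases eq_or_angle_eq_of_mem_Qset hx hα0 hα ha with rfl | ⟨-, hax⟩
  · exact angle_le_of_mem_Qset_of_angle_le hα0 hα hy hxy hxy' hb
  rcases eq_or_angle_eq_of_mem_Qset hy hα0 hα hb with rfl | ⟨-, hby⟩
  · rw [angle_comm]
    exact angle_le_of_mem_Qset_of_angle_le hα0 hα hx (by rwa [angle_comm]) (by rwa [angle_comm]) ha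
  · have h₁ := angle_le_angle_add_angle a (-x) b
    have h₂ := angle_le_angle_add_angle (-x) (-y) b
    rw [angle_neg_right, angle_comm a x, hax] at h₁
    rw [angle_neg_neg, angle_neg_left y b, hby] at h₂
    linarith

end Qset

theorem stmt_5 (n : ℕ) (α : ℝ) (hα0 : 0 < α) (hα : α ≤ π / 6)
    (X : Set (EuclideanSpace ℝ (Fin n))) (hX : X ⊆ unitSphere n)
    (hangle : ∀ x ∈ X, ∀ y ∈ X, x ≠ y →
      4 * α ≤ InnerProductGeometry.angle x y ∧ InnerProductGeometry.angle x y ≤ π - 6 * α) :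
    Metric.diam (⋃ x ∈ X, Qset x α) ≤ 2 * Real.cos α := by
  have hα' : α ≤ π / 2 := by linarith [pi_pos]
  refine Metric.diam_le_of_forall_dist_le
    (mul_nonneg zero_le_two (cos_nonneg_of_neg_pi_div_two_le_of_le (by linarith) hα')) ?_
  simp only [Set.mem_iUnion]
  rintro a ⟨x, hxX, ha⟩ b ⟨y, hyX, hb⟩
  have hx := norm_eq_one_of_mem_unitSphere (hX hxX)
  have hy := norm_eq_one_of_mem_unitSphere (hX hyX)
  have hangle_ab : angle a b ≤ π - 2 * α := by
    by_cases hxy : x = y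
    · subst hxy
      exact angle_le_of_mem_Qset_self hx hα0.le hα ha hb
    · obtain ⟨hxy₁, hxy₂⟩ := hangle x hxX y hyX hxy
      exact angle_le_of_mem_Qset_of_mem_Qset hα0.le hα' hx hy hxy₁ hxy₂ ha hb
  rw [dist_eq_norm]
  exact norm_sub_le_two_mul_cos_of_angle_le (norm_eq_one_of_mem_Qset hx hα0.le hα' ha)
    (norm_eq_one_of_mem_Qset hy hα0.le hα' hb) hα0.le hα' hangle_ab
end

section
/- Let n ≥ 2, x ∈ S^{n-1}, and 0 < α ≤ π/6. Then diam Q(x,α) = 2cos α. -/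
open Real

open RealInnerProductSpace

lemma eq_of_sq_eq' (a b : ℝ) (ha : 0 ≤ a) (hb : 0 ≤ b) (h : a^2 = b^2) : a = b := by
  have := Real.sqrt_sq ha
  have := Real.sqrt_sq hb
  rw [← Real.sqrt_sq ha, ← Real.sqrt_sq hb, h]

lemma exists_ortho (n : ℕ) (hn : 2 ≤ n) (x : EuclideanSpace ℝ (Fin n)) (hx : ‖x‖ = 1) :
    ∃ w : EuclideanSpace ℝ (Fin n), ‖w‖ = 1 ∧ ⟪x, w⟫ = 0 := by
  have hx0 : x ≠ 0 := by intro h; simp [h] at hx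
  have h1 : Module.finrank ℝ (ℝ ∙ x) = 1 := finrank_span_singleton hx0
  have h2 := Submodule.finrank_add_finrank_orthogonal (𝕜 := ℝ) (ℝ ∙ x)
  have hfr : Module.finrank ℝ (EuclideanSpace ℝ (Fin n)) = n := by simp
  have h3 : 0 < Module.finrank ℝ ((ℝ ∙ x)ᗮ) := by omega
  obtain ⟨⟨v, hv⟩, hv0'⟩ := Module.finrank_pos_iff_exists_ne_zero.mp h3
  have hv0 : v ≠ 0 := by simpa [Submodule.mk_eq_zero] using hv0'
  refine ⟨‖v‖⁻¹ • v, ?_, ?_⟩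
  · simp [norm_smul, norm_ne_zero_iff.mpr hv0, inv_mul_cancel₀]
  · have := (Submodule.mem_orthogonal _ v).mp hv x (Submodule.mem_span_singleton_self x)
    simp [inner_smul_right, this]

lemma key_bound {n : ℕ} (x y z : EuclideanSpace ℝ (Fin n)) (hx : ‖x‖ = 1) (hy : ‖y‖ = 1)
    (hz : ‖z‖ = 1) (c : ℝ) (hyc : ⟪x, y⟫ = c) (hzc : ⟪x, z⟫ = c) :
    ‖y - z‖^2 ≤ 4 * (1 - c^2) := by
  set u := y - c • x with hu
  set v := z - c • x with hv
  have hcs := abs_real_inner_le_norm u v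
  have hyx : ⟪y, x⟫ = c := by rw [real_inner_comm]; exact hyc
  have hzx : ⟪z, x⟫ = c := by rw [real_inner_comm]; exact hzc
  have hu2 : ‖u‖^2 = 1 - c^2 := by
    rw [← real_inner_self_eq_norm_sq, hu]
    simp only [inner_sub_left, inner_sub_right, real_inner_smul_left, real_inner_smul_right,
      real_inner_self_eq_norm_sq, hx, hy, hyx, hyc, norm_smul, mul_one, Real.norm_eq_abs, sq_abs]
    ring
  have hv2 : ‖v‖^2 = 1 - c^2 := by
    rw [← real_inner_self_eq_norm_sq, hv]
    simp only [inner_sub_left, inner_sub_right, real_inner_smul_left, real_inner_smul_right,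
      real_inner_self_eq_norm_sq, hx, hz, hzx, hzc, norm_smul, mul_one, Real.norm_eq_abs, sq_abs]
    ring
  have huv : ⟪u, v⟫ = ⟪y, z⟫ - c^2 := by
    rw [hu, hv]
    simp only [inner_sub_left, inner_sub_right, real_inner_smul_left, real_inner_smul_right,
      real_inner_self_eq_norm_sq, hx, hyx, hzx, hyc, hzc, norm_smul, mul_one, Real.norm_eq_abs, sq_abs]
    ring
  have hyz : ‖y - z‖^2 = 2 - 2 * ⟪y, z⟫ := by
    rw [← real_inner_self_eq_norm_sq]
    simp only [inner_sub_left, inner_sub_right, real_inner_self_eq_norm_sq, hy, hz,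
      real_inner_comm z y]
    ring
  have h1 : -(‖u‖ * ‖v‖) ≤ ⟪u, v⟫ := neg_le_of_abs_le hcs
  nlinarith [norm_nonneg u, norm_nonneg v, sq_nonneg (‖u‖ - ‖v‖), sq_nonneg (‖u‖ + ‖v‖)]

theorem stmt_7 (n : ℕ) (hn : 2 ≤ n) (x : EuclideanSpace ℝ (Fin n)) (hx : x ∈ unitSphere n)
    (α : ℝ) (hα0 : 0 < α) (hα : α ≤ π / 6) :
    Metric.diam (Qset x α) = 2 * Real.cos α := by
  have hπ := Real.pi_pos
  have hx' : ‖x‖ = 1 := by simpa [unitSphere] using hx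
  have hcos : 0 < Real.cos α := Real.cos_pos_of_mem_Ioo ⟨by linarith, by linarith⟩
  have hsin0 : 0 ≤ Real.sin α := Real.sin_nonneg_of_nonneg_of_le_pi hα0.le (by linarith)
  have hsin : Real.sin α ≤ 1/2 := by
    rw [← Real.sin_pi_div_six]
    exact Real.strictMonoOn_sin.monotoneOn ⟨by linarith, by linarith⟩
      ⟨by linarith, by linarith⟩ hα
  have hpyth := Real.sin_sq_add_cos_sq α
  -- inner product of ring elements with x
  have inner_eq : ∀ y : EuclideanSpace ℝ (Fin n), ‖y‖ = 1 → ‖x - y‖ = 2 * Real.cos α →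
      ⟪x, y⟫ = 1 - 2 * (Real.cos α)^2 := by
    intro y hy hxy
    have h1 : ‖x - y‖^2 = 2 - 2 * ⟪x, y⟫ := by
      rw [← real_inner_self_eq_norm_sq]
      simp only [inner_sub_left, inner_sub_right, real_inner_self_eq_norm_sq, hx', hy,
        real_inner_comm y x]
      ring
    rw [hxy] at h1
    linear_combination h1/2
  -- upper bound
  have hub : ∀ a ∈ Qset x α, ∀ b ∈ Qset x α, dist a b ≤ 2 * Real.cos α := by
    intro a ha b hb
    rw [dist_eq_norm]
    rcases ha with ha | ⟨ha1, ha2⟩ <;> rcases hb with hb | ⟨hb1, hb2⟩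
    · simp only [Set.mem_singleton_iff] at ha hb
      rw [ha, hb]; simp; positivity
    · simp only [Set.mem_singleton_iff] at ha
      rw [ha]; exact le_of_eq hb2
    · simp only [Set.mem_singleton_iff] at hb
      rw [hb, norm_sub_rev]; exact le_of_eq ha2
    · have ha1' : ‖a‖ = 1 := by simpa [unitSphere] using ha1
      have hb1' : ‖b‖ = 1 := by simpa [unitSphere] using hb1
      have hk := key_bound x a b hx' ha1' hb1' (1 - 2 * (Real.cos α)^2)
        (inner_eq a ha1' ha2) (inner_eq b hb1' hb2)
      have hC : 3/4 ≤ (Real.cos α)^2 := by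
        nlinarith [mul_nonneg hsin0 (by linarith : (0:ℝ) ≤ 1/2 - Real.sin α)]
      have h4 : ‖a - b‖^2 ≤ (2 * Real.cos α)^2 := by
        nlinarith [mul_nonneg (by linarith : (0:ℝ) ≤ (Real.cos α)^2 - 3/4)
          (by positivity : (0:ℝ) ≤ (Real.cos α)^2)]
      nlinarith [norm_nonneg (a - b)]
  -- witness
  obtain ⟨w, hw1, hw2⟩ := exists_ortho n hn x hx'
  have hw2' : ⟪w, x⟫ = 0 := by rw [real_inner_comm]; exact hw2
  set c : ℝ := 1 - 2 * (Real.cos α)^2 with hc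
  set s : ℝ := 2 * Real.sin α * Real.cos α with hs
  set y₀ : EuclideanSpace ℝ (Fin n) := c • x + s • w with hy₀
  have hy₀sq : ‖y₀‖^2 = c^2 + s^2 := by
    rw [← real_inner_self_eq_norm_sq, hy₀]
    simp only [inner_add_left, inner_add_right, real_inner_smul_left, real_inner_smul_right,
      real_inner_self_eq_norm_sq, hx', hw1, hw2, hw2', norm_smul, Real.norm_eq_abs,
      mul_pow, sq_abs, one_pow, mul_one, mul_zero, zero_mul, add_zero, zero_add]
  have hy₀n : ‖y₀‖ = 1 := by
    apply eq_of_sq_eq' _ _ (norm_nonneg _) zero_le_one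
    rw [hy₀sq, hc, hs]
    linear_combination (4 * (Real.cos α)^2) * hpyth
  have hxy₀sq : ‖x - y₀‖^2 = (2 * Real.cos α)^2 := by
    rw [← real_inner_self_eq_norm_sq, hy₀]
    simp only [inner_sub_left, inner_sub_right, inner_add_left, inner_add_right,
      real_inner_smul_left, real_inner_smul_right, real_inner_self_eq_norm_sq, hx', hw1,
      hw2, hw2', norm_smul, Real.norm_eq_abs, mul_pow, sq_abs, one_pow, mul_one, mul_zero,
      zero_mul, add_zero, zero_add]
    rw [hc, hs]
    linear_combination (4 * (Real.cos α)^2) * hpyth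
  have hxy₀ : ‖x - y₀‖ = 2 * Real.cos α :=
    eq_of_sq_eq' _ _ (norm_nonneg _) (by positivity) hxy₀sq
  have hy₀Q : y₀ ∈ Qset x α := Or.inr ⟨by simp [unitSphere, hy₀n], hxy₀⟩
  have hxQ : x ∈ Qset x α := Or.inl rfl
  have hbdd : Bornology.IsBounded (Qset x α) := by
    apply (Metric.isBounded_closedBall (x := (0 : EuclideanSpace ℝ (Fin n))) (r := 1)).subset
    rintro y (hy | ⟨hy1, _⟩)
    · simp only [Set.mem_singleton_iff] at hy
      rw [hy]; simp [hx'.le, mem_closedBall_zero_iff, hx']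
    · have : ‖y‖ = 1 := by simpa [unitSphere] using hy1
      simp [mem_closedBall_zero_iff, this]
  have hd1 : Metric.diam (Qset x α) ≤ 2 * Real.cos α :=
    Metric.diam_le_of_forall_dist_le (by positivity) hub
  have hd2 : 2 * Real.cos α ≤ Metric.diam (Qset x α) := by
    have := Metric.dist_le_diam_of_mem hbdd hxQ hy₀Q
    rwa [dist_eq_norm, hxy₀] at this
  linarith
end

section
/- Let 0 < α ≤ π/6, let X ⊂ S^{n-1} be a nonempty finite set (n ≥ 2), and let K be a convex body in ℝⁿ with diam K = 2cos α such that Q(x,α) ⊆ K for every x ∈ X. Suppose m is a positive integer such that every ξ ∈ S^{n-1} belongs to at most m of the spherical caps C(−x, π/2 − α), x ∈ X. Then the illumination number of K satisfies I(K) ≥ |X| / m. -/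
open Real
open scoped RealInnerProductSpace

/-- The boundary point `p` of `K` is illuminated by the direction `ξ`. -/
def Illuminates {n : ℕ} (K : Set (EuclideanSpace ℝ (Fin n)))
    (ξ p : EuclideanSpace ℝ (Fin n)) : Prop :=
  ∃ t : ℝ, 0 ≤ t ∧ p + t • ξ ∈ interior K

lemma exists_unit_orth {n : ℕ} (hn : 2 ≤ n) (x : EuclideanSpace ℝ (Fin n)) (hx : ‖x‖ = 1) :
    ∃ u : EuclideanSpace ℝ (Fin n), ‖u‖ = 1 ∧ ⟪x, u⟫ = 0 := by
  have hxne : x ≠ 0 := by intro h; rw [h, norm_zero] at hx; norm_num at hx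
  have h1 : Module.finrank ℝ (ℝ ∙ x) = 1 := finrank_span_singleton hxne
  have h2 : Module.finrank ℝ (EuclideanSpace ℝ (Fin n)) = n := by simp
  have hsum := Submodule.finrank_add_finrank_orthogonal (K := ℝ ∙ x)
  have hpos : 0 < Module.finrank ℝ ((ℝ ∙ x)ᗮ) := by omega
  have hne : ((ℝ ∙ x)ᗮ : Submodule ℝ (EuclideanSpace ℝ (Fin n))) ≠ ⊥ := by
    intro h; rw [h, finrank_bot] at hpos; omega
  obtain ⟨v, hv, hvne⟩ := Submodule.exists_mem_ne_zero_of_ne_bot hne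
  refine ⟨‖v‖⁻¹ • v, ?_, ?_⟩
  · rw [norm_smul, norm_inv, norm_norm, inv_mul_cancel₀ (norm_ne_zero_iff.2 hvne)]
  · rw [real_inner_smul_right]
    have : ⟪x, v⟫ = 0 := hv x (Submodule.mem_span_singleton_self x)
    rw [this, mul_zero]

lemma circle_pt {n : ℕ} (α : ℝ) (hα0 : 0 < α) (hα : α ≤ π / 6)
    (x u : EuclideanSpace ℝ (Fin n)) (hx : ‖x‖ = 1) (hu : ‖u‖ = 1) (hxu : ⟪x, u⟫ = 0) :
    ‖((-Real.cos (2*α)) • x + Real.sin (2*α) • u)‖ = 1 ∧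
    ‖x - ((-Real.cos (2*α)) • x + Real.sin (2*α) • u)‖ = 2 * Real.cos α := by
  have hπ : 0 < π := Real.pi_pos
  have hcos : 0 < Real.cos α := Real.cos_pos_of_mem_Ioo ⟨by linarith, by linarith⟩
  have hx2 : ⟪x, x⟫ = 1 := by rw [real_inner_self_eq_norm_sq, hx]; norm_num
  have hu2 : ⟪u, u⟫ = 1 := by rw [real_inner_self_eq_norm_sq, hu]; norm_num
  have hux : ⟪u, x⟫ = 0 := by rw [real_inner_comm]; exact hxu
  have hc2 : Real.cos (2*α) = 2 * Real.cos α ^ 2 - 1 := Real.cos_two_mul α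
  have hpyth : Real.sin (2*α) ^ 2 + Real.cos (2*α) ^ 2 = 1 := Real.sin_sq_add_cos_sq _
  constructor
  · have : ‖((-Real.cos (2*α)) • x + Real.sin (2*α) • u)‖ ^ 2 = 1 := by
      rw [← real_inner_self_eq_norm_sq]
      simp only [inner_add_add_self, real_inner_smul_left, real_inner_smul_right, hx2, hu2, hxu, hux]
      nlinarith [hpyth]
    nlinarith [norm_nonneg ((-Real.cos (2*α)) • x + Real.sin (2*α) • u)]
  · have : ‖x - ((-Real.cos (2*α)) • x + Real.sin (2*α) • u)‖ ^ 2 = (2 * Real.cos α) ^ 2 := by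
      rw [← real_inner_self_eq_norm_sq]
      simp only [inner_sub_sub_self, inner_add_add_self, real_inner_smul_left,
        real_inner_smul_right, inner_add_right, inner_add_left, hx2, hu2, hxu, hux]
      nlinarith [hpyth]
    nlinarith [norm_nonneg (x - ((-Real.cos (2*α)) • x + Real.sin (2*α) • u)), hcos]

set_option maxHeartbeats 1000000 in
lemma key_ineq {n : ℕ} (hn : 2 ≤ n) (α : ℝ) (hα0 : 0 < α) (hα : α ≤ π / 6)
    (x ξ : EuclideanSpace ℝ (Fin n)) (hx : ‖x‖ = 1) (hξ : ‖ξ‖ = 1)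
    (t : ℝ) (ht : 0 < t)
    (hball : ∀ y : EuclideanSpace ℝ (Fin n), ‖y‖ = 1 → ‖x - y‖ = 2 * Real.cos α →
      ‖x + t • ξ - y‖ ≤ 2 * Real.cos α) :
    Real.sin α ≤ ⟪-x, ξ⟫ := by
  have hπ : 0 < π := Real.pi_pos
  have hcos : 0 < Real.cos α := Real.cos_pos_of_mem_Ioo ⟨by linarith, by linarith⟩
  have hsin : 0 < Real.sin α := Real.sin_pos_of_pos_of_lt_pi hα0 (by linarith)
  obtain ⟨c, hc⟩ : ∃ c : ℝ, c = ⟪x, ξ⟫ := ⟨_, rfl⟩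
  obtain ⟨ξp, hξp⟩ : ∃ ξp : EuclideanSpace ℝ (Fin n), ξp = ξ - c • x := ⟨_, rfl⟩
  have hx2 : ⟪x, x⟫ = 1 := by rw [real_inner_self_eq_norm_sq, hx]; norm_num
  have hξ2 : ⟪ξ, ξ⟫ = 1 := by rw [real_inner_self_eq_norm_sq, hξ]; norm_num
  have hxξ' : ⟪ξ, x⟫ = c := (real_inner_comm x ξ).trans hc.symm
  have hnp : ‖ξp‖ ^ 2 = 1 - c ^ 2 := by
    rw [← real_inner_self_eq_norm_sq, hξp]
    simp only [inner_sub_sub_self, real_inner_smul_left, real_inner_smul_right, hx2, hξ2, hxξ', ← hc]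
    ring
  obtain ⟨u, hu1, hu2, hu3⟩ : ∃ u : EuclideanSpace ℝ (Fin n),
      ‖u‖ = 1 ∧ ⟪x, u⟫ = 0 ∧ ⟪ξ, u⟫ = -‖ξp‖ := by
    by_cases h0 : ξp = 0
    · obtain ⟨u, hu1, hu2⟩ := exists_unit_orth hn x hx
      refine ⟨u, hu1, hu2, ?_⟩
      have hξeq : ξ = c • x := by rwa [hξp, sub_eq_zero] at h0
      rw [hξeq, real_inner_smul_left, hu2, mul_zero, h0, norm_zero, neg_zero]
    · refine ⟨-(‖ξp‖⁻¹ • ξp), ?_, ?_, ?_⟩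
      · rw [norm_neg, norm_smul, norm_inv, norm_norm,
          inv_mul_cancel₀ (norm_ne_zero_iff.2 h0)]
      · rw [inner_neg_right, real_inner_smul_right]
        simp only [hξp, inner_sub_right, real_inner_smul_right, hx2, ← hc]
        ring
      · rw [inner_neg_right, real_inner_smul_right]
        have : ⟪ξ, ξp⟫ = ‖ξp‖ ^ 2 := by
          rw [hnp, hξp]
          simp only [inner_sub_right, real_inner_smul_right, hξ2, hxξ']
          ring
        rw [this]
        have hne : ‖ξp‖ ≠ 0 := norm_ne_zero_iff.2 h0
        field_simp
  obtain ⟨y, hy⟩ : ∃ y : EuclideanSpace ℝ (Fin n),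
      y = (-Real.cos (2*α)) • x + Real.sin (2*α) • u := ⟨_, rfl⟩
  obtain ⟨hy1, hy2⟩ := circle_pt α hα0 hα x u hx hu1 hu2
  rw [← hy] at hy1 hy2
  have hle := hball y hy1 hy2
  have hexp : ‖x + t • ξ - y‖ ^ 2 = ‖x - y‖ ^ 2 + 2 * t * ⟪x - y, ξ⟫ + t ^ 2 := by
    have : x + t • ξ - y = (x - y) + t • ξ := by abel
    rw [this, norm_add_sq_real, real_inner_smul_right, norm_smul, hξ, Real.norm_eq_abs,
      abs_of_pos ht]
    ring
  have hineg : ⟪x - y, ξ⟫ < 0 := by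
    have h1 : ‖x + t • ξ - y‖ ^ 2 ≤ (2 * Real.cos α) ^ 2 := by
      nlinarith [norm_nonneg (x + t • ξ - y)]
    rw [hexp, hy2] at h1
    nlinarith
  have hival : ⟪x - y, ξ⟫ = (1 + Real.cos (2*α)) * c + Real.sin (2*α) * ‖ξp‖ := by
    rw [hy]
    simp only [inner_sub_left, inner_add_left, real_inner_smul_left]
    rw [real_inner_comm ξ u, hu3, ← hc]
    ring
  rw [hival] at hineg
  have hc2 : Real.cos (2*α) = 2 * Real.cos α ^ 2 - 1 := Real.cos_two_mul α
  have hs2 : Real.sin (2*α) = 2 * Real.sin α * Real.cos α := Real.sin_two_mul α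
  rw [hc2, hs2] at hineg
  have hmain : Real.cos α * c + Real.sin α * ‖ξp‖ < 0 := by nlinarith
  have hpyth : Real.sin α ^ 2 + Real.cos α ^ 2 = 1 := Real.sin_sq_add_cos_sq α
  have hcneg : c < 0 := by nlinarith [norm_nonneg ξp]
  rw [inner_neg_left, ← hc]
  by_contra hcon
  push_neg at hcon
  have h1 : c ^ 2 < Real.sin α ^ 2 := by nlinarith
  have h2 : Real.cos α ^ 2 < ‖ξp‖ ^ 2 := by nlinarith
  have h3 : Real.cos α < ‖ξp‖ := by nlinarith [norm_nonneg ξp]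
  nlinarith

theorem stmt_8 (n : ℕ) (hn : 2 ≤ n) (α : ℝ) (hα0 : 0 < α) (hα : α ≤ π / 6)
    (X : Set (EuclideanSpace ℝ (Fin n))) (hXfin : X.Finite) (hXne : X.Nonempty)
    (hX : X ⊆ unitSphere n)
    (K : Set (EuclideanSpace ℝ (Fin n)))
    (hKcomp : IsCompact K) (hKconv : Convex ℝ K) (hKint : (interior K).Nonempty)
    (hdiam : Metric.diam K = 2 * Real.cos α)
    (hQ : ∀ x ∈ X, Qset x α ⊆ K)
    (m : ℕ) (hm : 0 < m)
    (hcaps : ∀ ξ ∈ unitSphere n,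
      {x ∈ X | ξ ∈ sphericalCap (-x) (π / 2 - α)}.ncard ≤ m) :
    ∀ D : Set (EuclideanSpace ℝ (Fin n)), D.Finite → D ⊆ unitSphere n →
      (∀ p ∈ frontier K, ∃ ξ ∈ D, Illuminates K ξ p) →
      (X.ncard : ℝ) / m ≤ (D.ncard : ℝ) := by
  intro D hDfin hDsub hillum
  classical
  have hπ : 0 < π := Real.pi_pos
  have hcos : 0 < Real.cos α := Real.cos_pos_of_mem_Ioo ⟨by linarith, by linarith⟩
  have hsin : 0 < Real.sin α := Real.sin_pos_of_pos_of_lt_pi hα0 (by linarith)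
  -- key step: for each x ∈ X there is ξ ∈ D with ξ in the cap C(-x, π/2 - α)
  have key : ∀ x ∈ X, ∃ ξ ∈ D, ξ ∈ sphericalCap (-x) (π / 2 - α) := by
    intro x hxX
    have hx1 : ‖x‖ = 1 := by
      have := hX hxX
      simpa [unitSphere, mem_sphere_iff_norm] using this
    -- membership of circle points in K
    have hcirc : ∀ y : EuclideanSpace ℝ (Fin n), ‖y‖ = 1 → ‖x - y‖ = 2 * Real.cos α →
        y ∈ K := by
      intro y h1 h2
      exact hQ x hxX (Or.inr ⟨by simpa [unitSphere, mem_sphere_iff_norm] using h1, h2⟩)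
    have hxK : x ∈ K := hQ x hxX (Or.inl rfl)
    -- a concrete circle point
    obtain ⟨u, hu1, hu2⟩ := exists_unit_orth hn x hx1
    obtain ⟨hy1, hy2⟩ := circle_pt α hα0 hα x u hx1 hu1 hu2
    obtain ⟨y0, hy0⟩ : ∃ y0 : EuclideanSpace ℝ (Fin n),
        y0 = (-Real.cos (2*α)) • x + Real.sin (2*α) • u := ⟨_, rfl⟩
    rw [← hy0] at hy1 hy2
    have hy0K : y0 ∈ K := hcirc y0 hy1 hy2
    -- x is a frontier point of K
    have hxint : x ∉ interior K := by
      intro hxint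
      obtain ⟨ε, hε, hball⟩ := Metric.isOpen_iff.1 isOpen_interior x hxint
      obtain ⟨s, hs⟩ : ∃ s : ℝ, s = ε / (2 * (2 * Real.cos α)) := ⟨_, rfl⟩
      have hspos : 0 < s := by rw [hs]; positivity
      have hx' : x + s • (x - y0) ∈ K := by
        apply interior_subset
        apply hball
        rw [Metric.mem_ball, dist_eq_norm]
        have : x + s • (x - y0) - x = s • (x - y0) := by abel
        rw [this, norm_smul, Real.norm_eq_abs, abs_of_pos hspos, hy2, hs]
        have hlt : ε / (2 * (2 * Real.cos α)) * (2 * Real.cos α) = ε / 2 := by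
          field_simp [hcos.ne']
        rw [hlt]
        linarith
      have hdle := Metric.dist_le_diam_of_mem hKcomp.isBounded hx' hy0K
      rw [hdiam, dist_eq_norm] at hdle
      have heq : x + s • (x - y0) - y0 = (1 + s) • (x - y0) := by
        rw [add_smul, one_smul]; abel
      rw [heq, norm_smul, Real.norm_eq_abs, abs_of_pos (by linarith), hy2] at hdle
      nlinarith
    have hfront : x ∈ frontier K := by
      rw [frontier, hKcomp.isClosed.closure_eq]
      exact ⟨hxK, hxint⟩
    obtain ⟨ξ, hξD, t, ht0, htint⟩ := hillum x hfront
    have hξ1 : ‖ξ‖ = 1 := by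
      have := hDsub hξD
      simpa [unitSphere, mem_sphere_iff_norm] using this
    have htpos : 0 < t := by
      rcases ht0.lt_or_eq with h | h
      · exact h
      · exfalso; apply hxint; simpa [← h] using htint
    have hballx : ∀ y : EuclideanSpace ℝ (Fin n), ‖y‖ = 1 → ‖x - y‖ = 2 * Real.cos α →
        ‖x + t • ξ - y‖ ≤ 2 * Real.cos α := by
      intro y h1 h2
      have hyK := hcirc y h1 h2
      have := Metric.dist_le_diam_of_mem hKcomp.isBounded (interior_subset htint) hyK
      rwa [hdiam, dist_eq_norm] at this
    have hkey := key_ineq hn α hα0 hα x ξ hx1 hξ1 t htpos hballx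
    refine ⟨ξ, hξD, hDsub hξD, ?_⟩
    have hnx : ‖-x‖ = 1 := by rw [norm_neg, hx1]
    have hile : ⟪-x, ξ⟫ ≤ 1 := by
      have := real_inner_le_norm (-x) ξ
      rw [hnx, hξ1] at this; linarith
    rw [InnerProductGeometry.angle, hnx, hξ1]
    have harg : ⟪-x, ξ⟫ / (1 * 1) = ⟪-x, ξ⟫ := by ring_nf
    rw [harg]
    have h1 : Real.arccos ⟪-x, ξ⟫ ≤ Real.arccos (Real.sin α) := by
      simp only [Real.arccos]
      have := Real.monotone_arcsin hkey
      linarith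
    have h2 : Real.arccos (Real.sin α) = π / 2 - α := by
      rw [← Real.cos_pi_div_two_sub]
      exact Real.arccos_cos (by linarith) (by linarith)
    linarith
  -- counting
  set P : EuclideanSpace ℝ (Fin n) → EuclideanSpace ℝ (Fin n) → Prop :=
    fun ξ x => ξ ∈ sphericalCap (-x) (π / 2 - α) with hP
  have hsub : hXfin.toFinset ⊆ hDfin.toFinset.biUnion
      (fun ξ => hXfin.toFinset.filter (fun x => P ξ x)) := by
    intro x hx
    rw [Set.Finite.mem_toFinset] at hx
    obtain ⟨ξ, hξD, hξ⟩ := key x hx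
    exact Finset.mem_biUnion.2 ⟨ξ, hDfin.mem_toFinset.2 hξD,
      Finset.mem_filter.2 ⟨hXfin.mem_toFinset.2 hx, hξ⟩⟩
  have hfiber : ∀ ξ ∈ hDfin.toFinset, (hXfin.toFinset.filter (fun x => P ξ x)).card ≤ m := by
    intro ξ hξ
    rw [Set.Finite.mem_toFinset] at hξ
    have hset : {x ∈ X | ξ ∈ sphericalCap (-x) (π / 2 - α)} =
        ↑(hXfin.toFinset.filter (fun x => P ξ x)) := by
      ext z
      simp [hP, Set.Finite.mem_toFinset]
    have := hcaps ξ (hDsub hξ)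
    rwa [hset, Set.ncard_coe_finset] at this
  have hcard : hXfin.toFinset.card ≤ hDfin.toFinset.card * m := by
    calc hXfin.toFinset.card
        ≤ (hDfin.toFinset.biUnion (fun ξ => hXfin.toFinset.filter (fun x => P ξ x))).card :=
          Finset.card_le_card hsub
      _ ≤ ∑ ξ ∈ hDfin.toFinset, (hXfin.toFinset.filter (fun x => P ξ x)).card :=
          Finset.card_biUnion_le
      _ ≤ ∑ _ξ ∈ hDfin.toFinset, m := Finset.sum_le_sum hfiber
      _ = hDfin.toFinset.card * m := by rw [Finset.sum_const, smul_eq_mul]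
  have hXcard : X.ncard = hXfin.toFinset.card := by
    rw [← Set.ncard_coe_finset, Set.Finite.coe_toFinset]
  have hDcard : D.ncard = hDfin.toFinset.card := by
    rw [← Set.ncard_coe_finset, Set.Finite.coe_toFinset]
  rw [div_le_iff₀ (by exact_mod_cast hm : (0:ℝ) < m)]
  rw [hXcard, hDcard]
  exact_mod_cast hcard
end

section
/- Let X ⊂ S^{n-1} be a nonempty finite set and let m be a positive integer such that every ξ ∈ S^{n-1} belongs to at most m of the spherical caps C(x, π/3), x ∈ X. Then any covering of X by closed balls of radius √3/2 uses at least |X| / m balls. -/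
open Real
open scoped RealInnerProductSpace

/-- arccos is antitone. -/
lemma arccos_antitone : Antitone Real.arccos := by
  intro a b hab
  unfold Real.arccos
  have := Real.monotone_arcsin hab
  linarith

lemma ball_points_in_cap {n : ℕ} (c x : EuclideanSpace ℝ (Fin n))
    (hx : ‖x‖ = 1) (hd : ‖x - c‖ ≤ Real.sqrt 3 / 2) (hc : c ≠ 0) :
    InnerProductGeometry.angle x ((‖c‖⁻¹ : ℝ) • c) ≤ π / 3 := by
  have hcpos : 0 < ‖c‖ := norm_pos_iff.mpr hc
  rw [InnerProductGeometry.angle_smul_right_of_pos _ _ (by positivity)]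
  have hd2 : ‖x - c‖ ^ 2 ≤ 3 / 4 := by
    have h := pow_le_pow_left₀ (norm_nonneg _) hd 2
    have h2 : (Real.sqrt 3 / 2) ^ 2 = 3 / 4 := by
      rw [div_pow, Real.sq_sqrt (by norm_num : (0:ℝ) ≤ 3)]
      norm_num
    linarith
  have hexp : ‖x - c‖ ^ 2 = ‖x‖ ^ 2 - 2 * ⟪x, c⟫ + ‖c‖ ^ 2 := norm_sub_sq_real x c
  have hinner : ⟪x, c⟫ ≥ ‖c‖ / 2 := by
    nlinarith [sq_nonneg (‖c‖ - 1/2)]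
  have hhalf : (1 : ℝ) / 2 ≤ ⟪x, c⟫ / (‖x‖ * ‖c‖) := by
    rw [hx, one_mul, le_div_iff₀ hcpos]
    linarith
  calc InnerProductGeometry.angle x c = Real.arccos (⟪x, c⟫ / (‖x‖ * ‖c‖)) := rfl
    _ ≤ Real.arccos (1 / 2) := arccos_antitone hhalf
    _ = π / 3 := by
        rw [← Real.cos_pi_div_three, Real.arccos_cos (by positivity)
          (by linarith [Real.pi_pos])]

theorem stmt_10 (n : ℕ)
    (X : Set (EuclideanSpace ℝ (Fin n))) (hXfin : X.Finite) (hXne : X.Nonempty)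
    (hX : X ⊆ unitSphere n)
    (m : ℕ) (hm : 0 < m)
    (hcaps : ∀ ξ ∈ unitSphere n, {x ∈ X | ξ ∈ sphericalCap x (π / 3)}.ncard ≤ m) :
    ∀ C : Set (EuclideanSpace ℝ (Fin n)), C.Finite →
      X ⊆ ⋃ c ∈ C, Metric.closedBall c (Real.sqrt 3 / 2) →
      (X.ncard : ℝ) / m ≤ (C.ncard : ℝ) := by
  intro C hCfin hcover
  -- each ball contains at most m points of X
  have key : ∀ c : EuclideanSpace ℝ (Fin n),
      (X ∩ Metric.closedBall c (Real.sqrt 3 / 2)).ncard ≤ m := by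
    intro c
    by_cases hc : c = 0
    · have : X ∩ Metric.closedBall c (Real.sqrt 3 / 2) = ∅ := by
        ext x
        simp only [Set.mem_inter_iff, Metric.mem_closedBall, Set.mem_empty_iff_false,
          iff_false, not_and]
        intro hxX
        have hx1 : ‖x‖ = 1 := by
          have := hX hxX
          simpa [unitSphere] using this
        rw [hc, dist_zero_right, hx1]
        intro h
        have h3 : Real.sqrt 3 < 2 := by
          rw [show (2:ℝ) = Real.sqrt 4 by
            rw [show (4:ℝ) = 2^2 by norm_num, Real.sqrt_sq (by norm_num)]]
          exact Real.sqrt_lt_sqrt (by norm_num) (by norm_num)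
        linarith
      rw [this]
      simpa using hm.le
    · set ξ : EuclideanSpace ℝ (Fin n) := (‖c‖⁻¹ : ℝ) • c with hξ
      have hcpos : 0 < ‖c‖ := norm_pos_iff.mpr hc
      have hξS : ξ ∈ unitSphere n := by
        simp only [unitSphere, Metric.mem_sphere, dist_zero_right, hξ, norm_smul,
          norm_inv, norm_norm]
        field_simp
      have hsub : X ∩ Metric.closedBall c (Real.sqrt 3 / 2) ⊆
          {x ∈ X | ξ ∈ sphericalCap x (π / 3)} := by
        rintro x ⟨hxX, hxB⟩
        have hx1 : ‖x‖ = 1 := by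
          have := hX hxX
          simpa [unitSphere] using this
        refine ⟨hxX, hξS, ?_⟩
        have hd : ‖x - c‖ ≤ Real.sqrt 3 / 2 := by
          rwa [Metric.mem_closedBall, dist_eq_norm] at hxB
        exact ball_points_in_cap c x hx1 hd hc
      calc (X ∩ Metric.closedBall c (Real.sqrt 3 / 2)).ncard
          ≤ {x ∈ X | ξ ∈ sphericalCap x (π / 3)}.ncard :=
            Set.ncard_le_ncard hsub (hXfin.subset (Set.sep_subset _ _))
        _ ≤ m := hcaps ξ hξS
  -- counting
  classical
  set XF := hXfin.toFinset with hXF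
  set CF := hCfin.toFinset with hCF
  have hXcard' : X.ncard = XF.card := Set.ncard_eq_toFinset_card X hXfin
  have hCcard : C.ncard = CF.card := Set.ncard_eq_toFinset_card C hCfin
  have hsubF : XF ⊆ CF.biUnion (fun c =>
      XF.filter (fun x => x ∈ Metric.closedBall c (Real.sqrt 3 / 2))) := by
    intro x hx
    have hxX : x ∈ X := by rwa [hXF, Set.Finite.mem_toFinset] at hx
    obtain ⟨c, hcC, hxc⟩ := Set.mem_iUnion₂.mp (hcover hxX)
    refine Finset.mem_biUnion.mpr ⟨c, ?_, ?_⟩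
    · rwa [hCF, Set.Finite.mem_toFinset]
    · exact Finset.mem_filter.mpr ⟨hx, hxc⟩
  have hcount : XF.card ≤ CF.card * m := by
    calc XF.card ≤ (CF.biUnion (fun c =>
          XF.filter (fun x => x ∈ Metric.closedBall c (Real.sqrt 3 / 2)))).card :=
            Finset.card_le_card hsubF
      _ ≤ ∑ c ∈ CF, (XF.filter (fun x => x ∈ Metric.closedBall c (Real.sqrt 3 / 2))).card :=
            Finset.card_biUnion_le
      _ ≤ ∑ _c ∈ CF, m := by
            apply Finset.sum_le_sum
            intro c _
            have heq : (XF.filter (fun x => x ∈ Metric.closedBall c (Real.sqrt 3 / 2)) : Set _)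
                = X ∩ Metric.closedBall c (Real.sqrt 3 / 2) := by
              ext x
              simp [hXF, Set.Finite.mem_toFinset]
            have : (XF.filter (fun x => x ∈ Metric.closedBall c (Real.sqrt 3 / 2))).card
                = (X ∩ Metric.closedBall c (Real.sqrt 3 / 2)).ncard := by
              rw [← heq, Set.ncard_coe_finset]
            rw [this]
            exact key c
      _ = CF.card * m := by rw [Finset.sum_const, smul_eq_mul]
  rw [div_le_iff₀ (by exact_mod_cast hm)]
  rw [hXcard', hCcard]
  exact_mod_cast hcount
end
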